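/- Suppose coinfinite primitive recursive sets X ⊆ ℕ and Z ⊆ ℕ are such that R_X <_pr R_Z and the pair (X,Z) does not satisfy the ♦-property. Then there exist no primitive recursive sets Y₀, Y₁ with R_X <_pr R_{Y_i} <_pr R_Z (i = 0,1), R_X ≡_pr R_{Y₀} ∧ R_{Y₁}, and R_Z ≡_pr R_{Y₀} ∨ R_{Y₁}. In other words, if the interval [R_X, R_Z] embeds the diamond lattice preserving top and bottom, then (X,Z) satisfies the ♦-property. -/

import Mathlib

/-- The equivalence relation `R_X`: `x R_X y` iff both in `X` or `x = y`. -/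
def REq (X : Set ℕ) (x y : ℕ) : Prop := (x ∈ X ∧ y ∈ X) ∨ x = y

/-- Primitive recursive reducibility between binary relations on ℕ. -/
def PrRed (R S : ℕ → ℕ → Prop) : Prop :=
  ∃ f : ℕ → ℕ, Primrec f ∧ ∀ x y, R x y ↔ S (f x) (f y)

/-- pr-bireducibility. -/
def PrEquiv (R S : ℕ → ℕ → Prop) : Prop := PrRed R S ∧ PrRed S R

/-- `X` is a primitive recursive set. -/
def PRSet (X : Set ℕ) : Prop :=
  ∃ f : ℕ → Bool, Primrec f ∧ ∀ n, n ∈ X ↔ f n = true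

/-- `#(0^X)[s]`: the number of elements of the complement of `X` that are `≤ s`. -/
noncomputable def zc (X : Set ℕ) (s : ℕ) : ℕ := {k | k ≤ s ∧ k ∉ X}.ncard

/-- The join of two sets, via pointwise max of zero-counts. -/
noncomputable def joinSet (U V : Set ℕ) : Set ℕ :=
  {n | n = 0 ∨ ∃ s, n = s + 1 ∧ max (zc U (s+1)) (zc V (s+1)) ≤ max (zc U s) (zc V s)}

/-- The meet of two sets, via pointwise min of zero-counts. -/
noncomputable def meetSet (U V : Set ℕ) : Set ℕ :=
  {n | n = 0 ∨ ∃ s, n = s + 1 ∧ min (zc U (s+1)) (zc V (s+1)) ≤ min (zc U s) (zc V s)}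

/-- The ♦-property for a pair of sets. -/
def DiamondProp (X Y : Set ℕ) : Prop :=
  ∃ X' Y' : Set ℕ, PRSet X' ∧ PRSet Y' ∧
    PrEquiv (REq X') (REq X) ∧ PrEquiv (REq Y') (REq Y) ∧
    ∀ s, ∃ t, s ≤ t ∧ zc X' t = zc Y' t

/-!
Given such `Y₀, Y₁`, the meet `M` and join `J` are primitive recursive with `R_M ≡ R_X` and
`R_J ≡ R_Z`, so the failure of the ♦-property makes `#(0^M)` and `#(0^J)` differ from some
stage on. Zero-counts grow by at most one per step, so they cannot cross without meeting: one of
them stays strictly below the other. A set whose zero-count is eventually below that of another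
set reduces to it, by sending the `n`-th zero of one to the `n`-th zero of the other. If `J` lies
below `M` this gives `R_Z ≤ R_X`. If `M` lies below `J`, then `#(0^{Y₀})` and `#(0^{Y₁})` never
agree (else min = max), so one of them, say `Y₁`, stays above the other, hence equals the max
and dominates `J`, giving `R_Z ≤ R_{Y₁}`.
-/

open scoped Classical

section ZeroCount

variable {A : Set ℕ} {x y : ℕ}

lemma zc_eq_card_filter (A : Set ℕ) (s : ℕ) :
    zc A s = ((Finset.range (s + 1)).filter (· ∉ A)).card := by
  rw [zc, ← Set.ncard_coe_finset]
  congr 1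
  ext k
  simp

lemma zc_zero (A : Set ℕ) : zc A 0 = if 0 ∈ A then 0 else 1 := by
  rw [zc_eq_card_filter]
  by_cases h : 0 ∈ A <;> simp [h, Finset.filter_singleton]

lemma zc_succ (A : Set ℕ) (s : ℕ) : zc A (s + 1) = zc A s + if s + 1 ∈ A then 0 else 1 := by
  rw [zc_eq_card_filter, zc_eq_card_filter, Finset.range_add_one, Finset.filter_insert]
  by_cases h : s + 1 ∈ A
  · simp [h]
  · rw [if_pos h, Finset.card_insert_of_notMem (by simp), if_neg h]

lemma zc_succ_eq_or (A : Set ℕ) (s : ℕ) : zc A (s + 1) = zc A s ∨ zc A (s + 1) = zc A s + 1 := by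
  rw [zc_succ]
  split <;> simp

lemma zc_succ_le (A : Set ℕ) (s : ℕ) : zc A (s + 1) ≤ zc A s + 1 := by
  rcases zc_succ_eq_or A s with h | h <;> omega

lemma zc_mono (A : Set ℕ) : Monotone (zc A) :=
  monotone_nat_of_le_succ fun s => by rcases zc_succ_eq_or A s with h | h <;> omega

lemma one_le_zc_of_notMem (h : x ∉ A) : 1 ≤ zc A x := by
  cases x with
  | zero => simp [zc_zero, h]
  | succ t => simp [zc_succ, h]

lemma zc_lt_of_lt_of_notMem (hxy : x < y) (hy : y ∉ A) : zc A x < zc A y := by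
  obtain ⟨t, rfl⟩ : ∃ t, y = t + 1 := Nat.exists_eq_succ_of_ne_zero (by omega)
  have := zc_mono A (Nat.le_of_lt_succ hxy)
  simp only [zc_succ, hy, if_false]
  omega

lemma zc_injOn_compl (A : Set ℕ) : Set.InjOn (zc A) Aᶜ := by
  intro x hx y hy hxy
  by_contra hne
  rcases Nat.lt_or_gt_of_ne hne with h | h
  · exact (zc_lt_of_lt_of_notMem h hy).ne hxy
  · exact (zc_lt_of_lt_of_notMem h hx).ne' hxy

lemma exists_notMem_zc_eq {n : ℕ} (h1 : 1 ≤ n) :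
    ∀ m, n ≤ zc A m → ∃ y ≤ m, y ∉ A ∧ zc A y = n
  | 0, hn => by
    have h0 : 0 ∉ A := fun h => by simp [zc_zero, h] at hn; omega
    refine ⟨0, le_rfl, h0, ?_⟩
    simp [zc_zero, h0] at hn ⊢
    omega
  | m + 1, hn => by
    by_cases hm : n ≤ zc A m
    · obtain ⟨y, hy, hyA, hyn⟩ := exists_notMem_zc_eq h1 m hm
      exact ⟨y, by omega, hyA, hyn⟩
    · have hA : m + 1 ∉ A := fun h => by simp [zc_succ, h] at hn; omega
      exact ⟨m + 1, le_rfl, hA, by have := zc_succ_le A m; omega⟩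

end ZeroCount

lemma PRSet.primrecPred {A : Set ℕ} (hA : PRSet A) : PrimrecPred (· ∈ A) := by
  obtain ⟨f, hf, hfA⟩ := hA
  exact (Primrec.primrecPred (p := fun n => f n = true) (by simpa using hf)).of_eq
    fun n => (hfA n).symm

lemma PRSet.primrec_zc {A : Set ℕ} (hA : PRSet A) : Primrec (zc A) := by
  have hstep : Primrec₂ fun (s k : ℕ) => k + if s + 1 ∈ A then 0 else 1 :=
    Primrec.nat_add.comp₂ Primrec₂.right
      (Primrec.ite (hA.primrecPred.comp (Primrec.succ.comp Primrec.fst))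
        (Primrec.const 0) (Primrec.const 1)).to₂
  refine (Primrec.nat_rec₁ (zc A 0) hstep).of_eq fun s => ?_
  induction s with
  | zero => rfl
  | succ s ih => simp [zc_succ, ih]

/-- The complement of `stepSet g` (apart from `0`) is the set of stages at which `g` increases,
so its zero-count recovers `g`; `meetSet` and `joinSet` are the instances `g = min, max` of two
zero-counts. -/
def stepSet (g : ℕ → ℕ) : Set ℕ := {n | n = 0 ∨ ∃ s, n = s + 1 ∧ g (s + 1) ≤ g s}

section StepSet

variable {g : ℕ → ℕ}

lemma zero_mem_stepSet (g : ℕ → ℕ) : 0 ∈ stepSet g := Or.inl rfl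

lemma succ_mem_stepSet_iff (s : ℕ) : s + 1 ∈ stepSet g ↔ g (s + 1) ≤ g s := by
  simp [stepSet]

lemma zc_stepSet_add (hg : ∀ s, g (s + 1) = g s ∨ g (s + 1) = g s + 1) (s : ℕ) :
    zc (stepSet g) s + g 0 = g s := by
  induction s with
  | zero => simp [zc_zero, zero_mem_stepSet]
  | succ s ih =>
    rw [zc_succ, succ_mem_stepSet_iff]
    rcases hg s with h | h <;> simp [h] <;> omega

lemma PRSet.stepSet (hg : Primrec g) : PRSet (stepSet g) := by
  refine ⟨fun n => decide (n = 0 ∨ g n ≤ g (n - 1)), ?_, fun n => ?_⟩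
  · exact (PrimrecPred.or (Primrec.eq.comp Primrec.id (Primrec.const 0))
      (Primrec.nat_le.comp hg (hg.comp (Primrec.nat_sub.comp Primrec.id (Primrec.const 1))))).decide
  · cases n with
    | zero => simp [zero_mem_stepSet]
    | succ s => simp [succ_mem_stepSet_iff]

end StepSet

section MeetJoin

variable {U V : Set ℕ}

lemma meetSet_eq_stepSet (U V : Set ℕ) :
    meetSet U V = stepSet fun s => min (zc U s) (zc V s) := rfl

lemma joinSet_eq_stepSet (U V : Set ℕ) :
    joinSet U V = stepSet fun s => max (zc U s) (zc V s) := rfl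

lemma zc_meetSet_add (U V : Set ℕ) (s : ℕ) :
    zc (meetSet U V) s + min (zc U 0) (zc V 0) = min (zc U s) (zc V s) := by
  rw [meetSet_eq_stepSet]
  refine zc_stepSet_add (fun t => ?_) s
  rcases zc_succ_eq_or U t with h | h <;> rcases zc_succ_eq_or V t with h' | h' <;> omega

lemma zc_joinSet_add (U V : Set ℕ) (s : ℕ) :
    zc (joinSet U V) s + max (zc U 0) (zc V 0) = max (zc U s) (zc V s) := by
  rw [joinSet_eq_stepSet]
  refine zc_stepSet_add (fun t => ?_) s
  rcases zc_succ_eq_or U t with h | h <;> rcases zc_succ_eq_or V t with h' | h' <;> omega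

lemma PRSet.meetSet (hU : PRSet U) (hV : PRSet V) : PRSet (meetSet U V) :=
  PRSet.stepSet (Primrec.nat_min.comp hU.primrec_zc hV.primrec_zc)

lemma PRSet.joinSet (hU : PRSet U) (hV : PRSet V) : PRSet (joinSet U V) :=
  PRSet.stepSet (Primrec.nat_max.comp hU.primrec_zc hV.primrec_zc)

end MeetJoin

lemma PrRed.trans {R S T : ℕ → ℕ → Prop} (hRS : PrRed R S) (hST : PrRed S T) : PrRed R T := by
  obtain ⟨f, hf, hRS⟩ := hRS
  obtain ⟨g, hg, hST⟩ := hST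
  exact ⟨g ∘ f, hg.comp hf, fun x y => (hRS x y).trans (hST (f x) (f y))⟩

lemma REq.symm {A : Set ℕ} {x y : ℕ} (h : REq A x y) : REq A y x := by
  rcases h with ⟨hx, hy⟩ | rfl
  exacts [Or.inl ⟨hy, hx⟩, Or.inr rfl]

lemma REq.comm {A : Set ℕ} {x y : ℕ} : REq A x y ↔ REq A y x := ⟨REq.symm, REq.symm⟩

lemma REq.eq_of_notMem {A : Set ℕ} {x y : ℕ} (h : REq A x y) (hx : x ∉ A) : x = y :=
  h.resolve_left fun h => hx h.1

section Reduction

variable {A B : Set ℕ}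

lemma prRed_REq_of_injective_on_compl {f : ℕ → ℕ} (hf : Primrec f)
    (hB : ∀ x y, x ∈ B → y ∈ B → REq A (f x) (f y)) (hBc : ∀ x, x ∉ B → f x ∉ A)
    (hinj : ∀ x y, x ∉ B → (f x = f y ↔ x = y)) : PrRed (REq B) (REq A) := by
  have key : ∀ x y, x ∉ B → (REq B x y ↔ REq A (f x) (f y)) := fun x y hx =>
    ⟨fun h => by rw [h.eq_of_notMem hx]; exact Or.inr rfl,
      fun h => Or.inr ((hinj x y hx).1 (h.eq_of_notMem (hBc x hx)))⟩
  refine ⟨f, hf, fun x y => ?_⟩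
  by_cases hx : x ∈ B
  · by_cases hy : y ∈ B
    · exact iff_of_true (Or.inl ⟨hx, hy⟩) (hB x y hx hy)
    · exact REq.comm.trans ((key y x hy).trans REq.comm)
  · exact key x y hx

lemma prRed_REq_empty (hB : PRSet B) : PrRed (REq B) (REq ∅) := by
  refine prRed_REq_of_injective_on_compl (f := fun x => if x ∈ B then 0 else zc B x)
    (Primrec.ite hB.primrecPred (Primrec.const 0) hB.primrec_zc)
    (fun x y hx hy => by simp [hx, hy, REq]) (fun _ _ => Set.notMem_empty _) fun x y hx => ?_
  have hx1 := one_le_zc_of_notMem hx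
  by_cases hy : y ∈ B
  · simp only [hx, hy, if_true, if_false]
    exact iff_of_false (by omega) fun h => hx (h ▸ hy)
  · simp only [hx, hy, if_false]
    exact (zc_injOn_compl B).eq_iff hx hy

/-- The reduction sends the `n`-th element of `Bᶜ` to the `n`-th element of `Aᶜ`, found by a
bounded search since `#(0^B)[x] ≤ #(0^A)[max x s₀]`. -/
lemma prRed_REq_of_nonempty_of_zc_le (hA : PRSet A) (hB : PRSet B) (hAne : A.Nonempty)
    (s₀ : ℕ) (hle : ∀ t ≥ s₀, zc B t ≤ zc A t) : PrRed (REq B) (REq A) := by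
  obtain ⟨a, ha⟩ := hAne
  set P : ℕ → ℕ → Prop := fun x y => y ∉ A ∧ zc A y = zc B x
  have hP : ∀ x, x ∉ B → P x (Nat.findGreatest (P x) (max x s₀)) := fun x hx => by
    obtain ⟨y, hy, hyP⟩ := exists_notMem_zc_eq (one_le_zc_of_notMem hx) (max x s₀)
      ((zc_mono B (le_max_left x s₀)).trans (hle _ (le_max_right x s₀)))
    exact Nat.findGreatest_spec hy hyP
  have hPrec : PrimrecRel P := (hA.primrecPred.comp Primrec.snd).not.and
    (Primrec.eq.comp (hA.primrec_zc.comp Primrec.snd) (hB.primrec_zc.comp Primrec.fst))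
  refine prRed_REq_of_injective_on_compl
    (f := fun x => if x ∈ B then a else Nat.findGreatest (P x) (max x s₀))
    (Primrec.ite hB.primrecPred (Primrec.const a)
      (Primrec.nat_findGreatest (Primrec.nat_max.comp Primrec.id (Primrec.const s₀)) hPrec))
    (fun x y hx hy => by simp [hx, hy, REq, ha]) (fun x hx => by simpa [hx] using (hP x hx).1)
    fun x y hx => ?_
  by_cases hy : y ∈ B
  · simp only [hx, hy, if_true, if_false]
    exact iff_of_false (fun h => (hP x hx).1 (h ▸ ha)) fun h => hx (h ▸ hy)
  · simp only [hx, hy, if_false]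
    refine ⟨fun h => (zc_injOn_compl B) hx hy ?_, fun h => h ▸ rfl⟩
    rw [← (hP x hx).2, ← (hP y hy).2, h]

lemma prRed_REq_of_zc_le (hA : PRSet A) (hB : PRSet B) (s₀ : ℕ)
    (hle : ∀ t ≥ s₀, zc B t ≤ zc A t) : PrRed (REq B) (REq A) := by
  rcases A.eq_empty_or_nonempty with rfl | hAne
  exacts [prRed_REq_empty hB, prRed_REq_of_nonempty_of_zc_le hA hB hAne s₀ hle]

end Reduction

lemma forall_lt_of_lt_of_forall_ne {u v : ℕ → ℕ} (hu : ∀ t, u (t + 1) ≤ u t + 1)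
    (hv : Monotone v) {s : ℕ} (hs : u s < v s) (hne : ∀ t ≥ s, u t ≠ v t) :
    ∀ t ≥ s, u t < v t := by
  intro t ht
  induction t, ht using Nat.le_induction with
  | base => exact hs
  | succ t ht ih =>
    have := hu t
    have : v t ≤ v (t + 1) := hv (Nat.le_succ t)
    have := hne (t + 1) (by omega)
    omega

lemma zc_lt_of_lt_of_forall_ne {A B : Set ℕ} {s : ℕ} (hs : zc A s < zc B s)
    (hne : ∀ t ≥ s, zc A t ≠ zc B t) : ∀ t ≥ s, zc A t < zc B t :=
  forall_lt_of_lt_of_forall_ne (zc_succ_le A) (zc_mono B) hs hne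

lemma zc_joinSet_le_of_zc_meetSet_lt {U V : Set ℕ} {s : ℕ}
    (hlt : ∀ t ≥ s, zc (meetSet U V) t < zc (joinSet U V) t) :
    (∀ t ≥ s, zc (joinSet U V) t ≤ zc U t) ∨ (∀ t ≥ s, zc (joinSet U V) t ≤ zc V t) := by
  have hne : ∀ t ≥ s, zc U t ≠ zc V t := fun t ht h => by
    have := zc_meetSet_add U V t
    have := zc_joinSet_add U V t
    have := hlt t ht
    omega
  rcases Nat.lt_or_gt_of_ne (hne s le_rfl) with hUV | hVU
  · right
    intro t ht
    have := zc_lt_of_lt_of_forall_ne hUV hne t ht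
    have := zc_joinSet_add U V t
    omega
  · left
    intro t ht
    have := zc_lt_of_lt_of_forall_ne hVU (fun t ht => (hne t ht).symm) t ht
    have := zc_joinSet_add U V t
    omega

theorem stmt_13_general (X Z : Set ℕ)
    (hnle : ¬ PrRed (REq Z) (REq X))
    (hnd : ¬ DiamondProp X Z) :
    ¬ ∃ Y₀ Y₁ : Set ℕ, PRSet Y₀ ∧ PRSet Y₁ ∧
      (PrRed (REq X) (REq Y₀) ∧ ¬ PrRed (REq Y₀) (REq X)) ∧
      (PrRed (REq Y₀) (REq Z) ∧ ¬ PrRed (REq Z) (REq Y₀)) ∧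
      (PrRed (REq X) (REq Y₁) ∧ ¬ PrRed (REq Y₁) (REq X)) ∧
      (PrRed (REq Y₁) (REq Z) ∧ ¬ PrRed (REq Z) (REq Y₁)) ∧
      PrEquiv (REq X) (REq (meetSet Y₀ Y₁)) ∧
      PrEquiv (REq Z) (REq (joinSet Y₀ Y₁)) := by
  rintro ⟨Y₀, Y₁, hY₀, hY₁, -, ⟨-, hZY₀⟩, -, ⟨-, hZY₁⟩, hmeet, hjoin⟩
  have hM := hY₀.meetSet hY₁
  have hJ := hY₀.joinSet hY₁
  obtain ⟨s, hs⟩ : ∃ s, ∀ t ≥ s, zc (meetSet Y₀ Y₁) t ≠ zc (joinSet Y₀ Y₁) t := by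
    by_contra! h
    exact hnd ⟨_, _, hM, hJ, ⟨hmeet.2, hmeet.1⟩, ⟨hjoin.2, hjoin.1⟩, h⟩
  rcases Nat.lt_or_gt_of_ne (hs s le_rfl) with hMJ | hJM
  · rcases zc_joinSet_le_of_zc_meetSet_lt (zc_lt_of_lt_of_forall_ne hMJ hs) with h | h
    · exact hZY₀ (hjoin.1.trans (prRed_REq_of_zc_le hY₀ hJ s h))
    · exact hZY₁ (hjoin.1.trans (prRed_REq_of_zc_le hY₁ hJ s h))
  · have hJM' := zc_lt_of_lt_of_forall_ne hJM fun t ht => (hs t ht).symm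
    exact hnle (hjoin.1.trans
      ((prRed_REq_of_zc_le hM hJ s fun t ht => (hJM' t ht).le).trans hmeet.2))

theorem stmt_13 (X Z : Set ℕ) (hX : PRSet X) (hZ : PRSet Z)
    (hXc : Xᶜ.Infinite) (hZc : Zᶜ.Infinite)
    (hle : PrRed (REq X) (REq Z)) (hnle : ¬ PrRed (REq Z) (REq X))
    (hnd : ¬ DiamondProp X Z) :
    ¬ ∃ Y₀ Y₁ : Set ℕ, PRSet Y₀ ∧ PRSet Y₁ ∧
      (PrRed (REq X) (REq Y₀) ∧ ¬ PrRed (REq Y₀) (REq X)) ∧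
      (PrRed (REq Y₀) (REq Z) ∧ ¬ PrRed (REq Z) (REq Y₀)) ∧
      (PrRed (REq X) (REq Y₁) ∧ ¬ PrRed (REq Y₁) (REq X)) ∧
      (PrRed (REq Y₁) (REq Z) ∧ ¬ PrRed (REq Z) (REq Y₁)) ∧
      PrEquiv (REq X) (REq (meetSet Y₀ Y₁)) ∧
      PrEquiv (REq Z) (REq (joinSet Y₀ Y₁)) :=
  stmt_13_general X Z hnle hnd
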